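/- arXiv:1801.00413 — 4 statements merged into one kernel-verified Lean document; each statement's English description precedes it below -/
import Mathlib

section
/- For the random walk on a connected weighted undirected graph G with transition matrix T = (diag(W1))^{-1}W, the commute time matrix satisfies C = (Σ_{k,t} w_kt)·Ω, where Ω is the matrix of effective resistances of G. -/
open Finset Relation Matrix
open scoped Classical

/-- `T` is a (row-)stochastic matrix. -/
def IsStochastic {n : ℕ} (T : Matrix (Fin n) (Fin n) ℝ) : Prop :=
  (∀ i j, 0 ≤ T i j) ∧ ∀ i, ∑ j, T i j = 1

/-- Irreducibility of a Markov chain: every state leads to every state. -/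
def IsIrreducibleMC {n : ℕ} (T : Matrix (Fin n) (Fin n) ℝ) : Prop :=
  ∀ i j, Relation.TransGen (fun a b => 0 < T a b) i j

/-- `pi` is the stationary distribution of `T`. -/
def IsStationaryDist {n : ℕ} (T : Matrix (Fin n) (Fin n) ℝ) (pi : Fin n → ℝ) : Prop :=
  (∀ i, 0 ≤ pi i) ∧ (∑ i, pi i) = 1 ∧ ∀ j, ∑ i, pi i * T i j = pi j

/-- The step relation of a set `A` of arcs. -/
def arcStep {n : ℕ} (A : Finset (Fin n × Fin n)) (x y : Fin n) : Prop := (x, y) ∈ A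

/-- `A` is an in-forest: no loops, out-degree at most one, and no directed cycles;
equivalently, every weak component is a converging tree. -/
def IsInForest {n : ℕ} (A : Finset (Fin n × Fin n)) : Prop :=
  (∀ a ∈ A, a.1 ≠ a.2) ∧
  (∀ v : Fin n, (A.filter fun a => a.1 = v).card ≤ 1) ∧
  ∀ v : Fin n, ¬ Relation.TransGen (arcStep A) v v

/-- `j` is a root (no outgoing arc) of the arc set `A`. -/
def IsRootOf {n : ℕ} (A : Finset (Fin n × Fin n)) (j : Fin n) : Prop := ∀ a ∈ A, a.1 ≠ j

/-- In the in-forest `A`, vertex `i` belongs to the tree converging to the root `j`. -/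
def InTreeOf {n : ℕ} (A : Finset (Fin n × Fin n)) (i j : Fin n) : Prop :=
  IsRootOf A j ∧ Relation.ReflTransGen (arcStep A) i j

/-- The weight of an arc set: the product of its arc weights. -/
noncomputable def digraphWeight {n : ℕ} (W : Matrix (Fin n) (Fin n) ℝ)
    (A : Finset (Fin n × Fin n)) : ℝ :=
  ∏ a ∈ A, W a.1 a.2

/-- Total weight of the in-forests satisfying the predicate `P`. -/
noncomputable def forestWeight {n : ℕ} (W : Matrix (Fin n) (Fin n) ℝ)
    (P : Finset (Fin n × Fin n) → Prop) : ℝ :=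
  ∑ A : Finset (Fin n × Fin n), if IsInForest A ∧ P A then digraphWeight W A else 0

/-- `σ_k`: total weight of in-forests with `k` arcs. -/
noncomputable def sigmaF {n : ℕ} (W : Matrix (Fin n) (Fin n) ℝ) (k : ℕ) : ℝ :=
  forestWeight W fun A => A.card = k

/-- `q^(k)_{ij}`: total weight of in-forests with `k` arcs in which vertex `i`
belongs to the tree converging to `j`. -/
noncomputable def qF {n : ℕ} (W : Matrix (Fin n) (Fin n) ℝ) (k : ℕ) (i j : Fin n) : ℝ :=
  forestWeight W fun A => A.card = k ∧ InTreeOf A i j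

/-- `q_j`: total weight of spanning trees converging to `j`. -/
noncomputable def treeW {n : ℕ} (W : Matrix (Fin n) (Fin n) ℝ) (j : Fin n) : ℝ :=
  qF W (n - 1) j j

/-- `f_{ij}`: total weight of 2-tree in-forests having one tree containing `i`
and the other tree converging to `j`. -/
noncomputable def fF {n : ℕ} (W : Matrix (Fin n) (Fin n) ℝ) (i j : Fin n) : ℝ :=
  forestWeight W fun A =>
    A.card = n - 2 ∧ IsRootOf A j ∧ ¬ Relation.ReflTransGen (arcStep A) i j

/-- `X` is the group inverse of `L`. -/
def IsGroupInverse {n : ℕ} (L X : Matrix (Fin n) (Fin n) ℝ) : Prop :=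
  L * X * L = L ∧ X * L * X = X ∧ L * X = X * L

/-- `M` is the matrix of mean first passage times (with `M j j` the mean return time):
the standard first-step equations. -/
def IsMFPTMatrix {n : ℕ} (T M : Matrix (Fin n) (Fin n) ℝ) : Prop :=
  ∀ i j, M i j = 1 + ∑ k ∈ Finset.univ.filter (fun k => k ≠ j), T i k * M k j

/-- `m` is the hitting-time function with `m i i = 0`. -/
def IsHittingTime {n : ℕ} (T : Matrix (Fin n) (Fin n) ℝ) (m : Fin n → Fin n → ℝ) : Prop :=
  (∀ i, m i i = 0) ∧ ∀ i j, i ≠ j → m i j = 1 + ∑ k, T i k * m k j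

/-- The Laplacian matrix of the weight matrix `W`. -/
noncomputable def lap {n : ℕ} (W : Matrix (Fin n) (Fin n) ℝ) : Matrix (Fin n) (Fin n) ℝ :=
  Matrix.diagonal (fun i => ∑ j, W i j) - W

/-- The (undirected) step relation of a canonically oriented edge set. -/
def edgeStep {n : ℕ} (A : Finset (Fin n × Fin n)) (x y : Fin n) : Prop :=
  (x, y) ∈ A ∨ (y, x) ∈ A

/-- Every pair in `A` is canonically oriented, so `A` encodes a set of undirected edges. -/
def IsEdgeSet {n : ℕ} (A : Finset (Fin n × Fin n)) : Prop := ∀ a ∈ A, a.1 < a.2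

/-- `A` is a spanning tree of the undirected graph on `Fin n`:
`n - 1` edges and connected. -/
def IsSpanningTreeU {n : ℕ} (A : Finset (Fin n × Fin n)) : Prop :=
  IsEdgeSet A ∧ A.card = n - 1 ∧ ∀ u v : Fin n, Relation.ReflTransGen (edgeStep A) u v

/-- `A` is a 2-tree spanning forest of the undirected graph on `Fin n`
having `i` and `j` in different trees. -/
def IsTwoForestSep {n : ℕ} (A : Finset (Fin n × Fin n)) (i j : Fin n) : Prop :=
  IsEdgeSet A ∧ A.card = n - 2 ∧ ¬ Relation.ReflTransGen (edgeStep A) i j ∧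
    ∀ v : Fin n, Relation.ReflTransGen (edgeStep A) v i ∨ Relation.ReflTransGen (edgeStep A) v j

/-- Total weight of the edge sets satisfying `P` (weights of forests are products of
edge weights; weights of sets of forests are sums). -/
noncomputable def uWeightSum {n : ℕ} (W : Matrix (Fin n) (Fin n) ℝ)
    (P : Finset (Fin n × Fin n) → Prop) : ℝ :=
  ∑ A : Finset (Fin n × Fin n), if P A then digraphWeight W A else 0

/-- The weighted undirected graph with weight matrix `W` is connected. -/
def IsConnectedW {n : ℕ} (W : Matrix (Fin n) (Fin n) ℝ) : Prop :=
  ∀ i j : Fin n, Relation.ReflTransGen (fun a b => 0 < W a b) i j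

/-! Write `L` for the Laplacian, `d` for the degree vector and `vol = ∑ d`. For a fixed target `j`,
the first-step equations say that `L m(·, j) = d - vol • eⱼ` (the value at `j` is forced by
`∑ᵢ (L x)ᵢ = 0`). Since the kernel of `L` consists of the constant vectors, the group inverse `Y`
recovers `x` from `L x` up to an additive constant, which gives
`m(i, j) = (Y d)ᵢ - (Y d)ⱼ - vol (Y i j - Y j j)`; the `Y d` terms cancel in `m(i, j) + m(j, i)`. -/

section Laplacian

variable {n : ℕ} {W : Matrix (Fin n) (Fin n) ℝ}

lemma lap_mulVec_apply (W : Matrix (Fin n) (Fin n) ℝ) (x : Fin n → ℝ) (i : Fin n) :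
    (lap W *ᵥ x) i = (∑ k, W i k) * x i - ∑ k, W i k * x k := by
  rw [lap, Matrix.sub_mulVec, Pi.sub_apply, Matrix.mulVec_diagonal]
  rfl

lemma sum_sum_mul_of_symm (hsym : ∀ i j, W i j = W j i) (f : Fin n → ℝ) :
    ∑ i, ∑ k, W i k * f k = ∑ k, (∑ j, W k j) * f k := by
  rw [Finset.sum_comm]
  refine Finset.sum_congr rfl fun k _ => ?_
  rw [Finset.sum_mul]
  exact Finset.sum_congr rfl fun i _ => by rw [hsym]

lemma sum_lap_mulVec_eq_zero (hsym : ∀ i j, W i j = W j i) (x : Fin n → ℝ) :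
    ∑ i, (lap W *ᵥ x) i = 0 := by
  simp only [lap_mulVec_apply, Finset.sum_sub_distrib, sum_sum_mul_of_symm hsym, sub_self]

lemma two_mul_sum_mul_lap_mulVec (hsym : ∀ i j, W i j = W j i) (x : Fin n → ℝ) :
    2 * ∑ i, x i * (lap W *ᵥ x) i = ∑ i, ∑ k, W i k * (x i - x k) ^ 2 := by
  have expand : ∀ i, ∑ k, W i k * (x i - x k) ^ 2
      = (∑ k, W i k) * x i ^ 2 - 2 * x i * ∑ k, W i k * x k + ∑ k, W i k * x k ^ 2 := by
    intro i
    rw [Finset.sum_mul, Finset.mul_sum, ← Finset.sum_sub_distrib, ← Finset.sum_add_distrib]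
    exact Finset.sum_congr rfl fun k _ => by ring
  rw [Finset.sum_congr rfl fun i _ => expand i, Finset.sum_add_distrib,
    sum_sum_mul_of_symm hsym fun k => x k ^ 2, Finset.mul_sum, ← Finset.sum_add_distrib]
  exact Finset.sum_congr rfl fun i _ => by rw [lap_mulVec_apply]; ring

lemma eq_of_lap_mulVec_eq_zero (hsym : ∀ i j, W i j = W j i) (hnn : ∀ i j, 0 ≤ W i j)
    (hconn : IsConnectedW W) {x : Fin n → ℝ} (hx : lap W *ᵥ x = 0) (a b : Fin n) :
    x a = x b := by
  have hterm_nonneg : ∀ i k, 0 ≤ W i k * (x i - x k) ^ 2 :=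
    fun i k => mul_nonneg (hnn i k) (sq_nonneg _)
  have hsum : ∑ i, ∑ k, W i k * (x i - x k) ^ 2 = 0 := by
    simp [← two_mul_sum_mul_lap_mulVec hsym, hx]
  have hterm : ∀ i k, W i k * (x i - x k) ^ 2 = 0 := fun i k =>
    (Finset.sum_eq_zero_iff_of_nonneg fun k _ => hterm_nonneg i k).mp
      ((Finset.sum_eq_zero_iff_of_nonneg fun i _ =>
        Finset.sum_nonneg fun k _ => hterm_nonneg i k).mp hsum i (Finset.mem_univ i))
      k (Finset.mem_univ k)
  have hadj : ∀ i k, 0 < W i k → x i = x k := fun i k hw => by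
    have := (mul_eq_zero.mp (hterm i k)).resolve_left hw.ne'
    exact sub_eq_zero.mp (pow_eq_zero_iff two_ne_zero |>.mp this)
  induction hconn a b with
  | refl => rfl
  | tail _ hstep ih => exact ih.trans (hadj _ _ hstep)

end Laplacian

lemma IsGroupInverse.mulVec_mulVec_apply_sub {n : ℕ} {L Y : Matrix (Fin n) (Fin n) ℝ}
    (hY : IsGroupInverse L Y) (hker : ∀ x : Fin n → ℝ, L *ᵥ x = 0 → ∀ a b, x a = x b)
    (v : Fin n → ℝ) (i j : Fin n) :
    (Y *ᵥ L *ᵥ v) i - (Y *ᵥ L *ᵥ v) j = v i - v j := by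
  have hL : L * (L * Y) = L := by rw [hY.2.2, ← Matrix.mul_assoc, hY.1]
  have hker_w : L *ᵥ ((L * Y) *ᵥ v - v) = 0 := by
    rw [Matrix.mulVec_sub, Matrix.mulVec_mulVec, hL, sub_self]
  have := hker _ hker_w i j
  rw [Matrix.mulVec_mulVec, ← hY.2.2]
  simp only [Pi.sub_apply] at this
  linarith

section HittingTime

variable {n : ℕ} {W : Matrix (Fin n) (Fin n) ℝ} {m : Fin n → Fin n → ℝ}

lemma lap_mulVec_hittingTime (hsym : ∀ i j, W i j = W j i) (hrow : ∀ i, 0 < ∑ j, W i j)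
    (hm : IsHittingTime (Matrix.of fun i j => W i j / ∑ k, W i k) m) (j : Fin n) :
    lap W *ᵥ (fun i => m i j)
      = (fun i => ∑ k, W i k) - (∑ k, ∑ t, W k t) • Pi.single j 1 := by
  have off_target : ∀ i, i ≠ j → (lap W *ᵥ fun i => m i j) i = ∑ k, W i k := by
    intro i hij
    have hstep : m i j = 1 + ∑ k, W i k / (∑ t, W i t) * m k j := hm.2 i j hij
    have hscale : ∑ k, W i k * m k j = (∑ t, W i t) * ∑ k, W i k / (∑ t, W i t) * m k j := by
      rw [Finset.mul_sum]
      exact Finset.sum_congr rfl fun k _ => by field_simp [(hrow i).ne']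
    rw [lap_mulVec_apply, hscale, hstep]
    ring
  have at_target : (lap W *ᵥ fun i => m i j) j = ∑ k, W j k - ∑ k, ∑ t, W k t := by
    have hsum := sum_lap_mulVec_eq_zero hsym fun i => m i j
    rw [← Finset.add_sum_erase _ _ (Finset.mem_univ j),
      Finset.sum_congr rfl fun i hi => off_target i (Finset.ne_of_mem_erase hi)] at hsum
    have := Finset.add_sum_erase Finset.univ (fun k => ∑ t, W k t) (Finset.mem_univ j)
    linarith
  funext i
  by_cases hij : i = j
  · subst hij
    simp [at_target]
  · simp [off_target i hij, Pi.single_eq_of_ne hij]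

lemma hittingTime_eq_groupInverse (hsym : ∀ i j, W i j = W j i) (hnn : ∀ i j, 0 ≤ W i j)
    (hconn : IsConnectedW W) (hrow : ∀ i, 0 < ∑ j, W i j)
    (hm : IsHittingTime (Matrix.of fun i j => W i j / ∑ k, W i k) m)
    {Y : Matrix (Fin n) (Fin n) ℝ} (hY : IsGroupInverse (lap W) Y) (i j : Fin n) :
    m i j = (Y *ᵥ fun k => ∑ t, W k t) i - (Y *ᵥ fun k => ∑ t, W k t) j
      - (∑ k, ∑ t, W k t) * (Y i j - Y j j) := by
  have h := hY.mulVec_mulVec_apply_sub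
    (fun _ hx => eq_of_lap_mulVec_eq_zero hsym hnn hconn hx) (fun i => m i j) i j
  rw [lap_mulVec_hittingTime hsym hrow hm, hm.1 j] at h
  simp only [Matrix.mulVec_sub, Matrix.mulVec_smul, Matrix.mulVec_single_one, Pi.sub_apply,
    Pi.smul_apply, Matrix.col_apply, smul_eq_mul] at h
  linarith

end HittingTime

theorem stmt9_general {n : ℕ} (W : Matrix (Fin n) (Fin n) ℝ)
    (hsym : ∀ i j, W i j = W j i) (hnn : ∀ i j, 0 ≤ W i j)
    (hconn : IsConnectedW W) (hrow : ∀ i, 0 < ∑ j, W i j)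
    (m : Fin n → Fin n → ℝ)
    (hm : IsHittingTime (Matrix.of fun i j => W i j / ∑ k, W i k) m)
    (Y : Matrix (Fin n) (Fin n) ℝ) (hY : IsGroupInverse (lap W) Y) :
    ∀ i j, m i j + m j i = (∑ k, ∑ t, W k t) * (Y i i + Y j j - Y i j - Y j i) := by
  intro i j
  rw [hittingTime_eq_groupInverse hsym hnn hconn hrow hm hY i j,
    hittingTime_eq_groupInverse hsym hnn hconn hrow hm hY j i]
  ring

/-- for the random walk on `G` with `T = (diag(W1))⁻¹·W`,
the commute times satisfy `C = (Σ_{k,t} w_kt)·Ω`. -/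
theorem stmt9 {n : ℕ} (hn : 0 < n) (W : Matrix (Fin n) (Fin n) ℝ)
    (hsym : ∀ i j, W i j = W j i) (hnn : ∀ i j, 0 ≤ W i j) (h0 : ∀ i, W i i = 0)
    (hconn : IsConnectedW W) (hrow : ∀ i, 0 < ∑ j, W i j)
    (m : Fin n → Fin n → ℝ)
    (hm : IsHittingTime (Matrix.of fun i j => W i j / ∑ k, W i k) m)
    (Y : Matrix (Fin n) (Fin n) ℝ) (hY : IsGroupInverse (lap W) Y) :
    ∀ i j, m i j + m j i = (∑ k, ∑ t, W k t) * (Y i i + Y j j - Y i j - Y j i) :=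
  stmt9_general W hsym hnn hconn hrow m hm Y hY
end

section
/- A quasi-metric m on a finite set V is weightable (i.e., there exists u : V → ℝ≥0 with m(i,j) + u(i) = m(j,i) + u(j) for all i,j) if and only if m satisfies the cyclic tour property: m(i,j) + m(j,k) + m(k,i) = m(i,k) + m(k,j) + m(j,i) for all i,j,k in V. -/
/-!
Writing `a i j = m i j - m j i`, a weight is a potential with `a i j = u j - u i`, and the cyclic
tour property says that `a` sums to zero around every triangle. Potentials clearly have this
property; conversely, fixing a base point `v₀`, the cyclic tour property through `v₀` shows that
`u i = a v₀ i` is a potential. On a finite set a potential is bounded below, so adding a constant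
makes it nonnegative.
-/

/-- `m` is a quasi-metric: nonnegative, vanishing exactly on the diagonal, and
satisfying the oriented triangle inequality. -/
def IsQuasiMetric {V : Type*} (m : V → V → ℝ) : Prop :=
  (∀ x y, 0 ≤ m x y) ∧ (∀ x y, m x y = 0 ↔ x = y) ∧ ∀ x y z, m x y ≤ m x z + m z y

section Weightable

variable {V : Type*} (m : V → V → ℝ)

def IsWeight (u : V → ℝ) : Prop :=
  ∀ i j, m i j + u i = m j i + u j

def HasCyclicTourProperty : Prop :=
  ∀ i j k, m i j + m j k + m k i = m i k + m k j + m j i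

variable {m}

theorem IsWeight.hasCyclicTourProperty {u : V → ℝ} (hu : IsWeight m u) :
    HasCyclicTourProperty m := by
  intro i j k
  linarith [hu i j, hu j k, hu k i]

theorem IsWeight.add_const {u : V → ℝ} (hu : IsWeight m u) (c : ℝ) :
    IsWeight m (fun i => u i + c) := by
  intro i j
  linarith [hu i j]

theorem HasCyclicTourProperty.isWeight_of_basepoint (hm : HasCyclicTourProperty m) (v₀ : V) :
    IsWeight m (fun i => m v₀ i - m i v₀) := by
  intro i j
  linarith [hm i j v₀]

theorem HasCyclicTourProperty.exists_isWeight (hm : HasCyclicTourProperty m) :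
    ∃ u, IsWeight m u := by
  cases isEmpty_or_nonempty V with
  | inl _ => exact ⟨0, fun i => isEmptyElim i⟩
  | inr hV => exact ⟨_, hm.isWeight_of_basepoint hV.some⟩

theorem IsWeight.exists_nonneg [Finite V] {u : V → ℝ} (hu : IsWeight m u) :
    ∃ w, (∀ i, 0 ≤ w i) ∧ IsWeight m w := by
  obtain ⟨c, hc⟩ := (Set.finite_range u).bddBelow
  refine ⟨fun i => u i + -c, fun i => ?_, hu.add_const (-c)⟩
  linarith [hc (Set.mem_range_self i)]

end Weightable

theorem stmt10_general {V : Type*} [Fintype V] (m : V → V → ℝ) :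
    (∃ u : V → ℝ, (∀ i, 0 ≤ u i) ∧ ∀ i j, m i j + u i = m j i + u j) ↔
      ∀ i j k, m i j + m j k + m k i = m i k + m k j + m j i := by
  constructor
  · rintro ⟨u, -, hu⟩
    exact IsWeight.hasCyclicTourProperty hu
  · intro hm
    obtain ⟨u, hu⟩ := HasCyclicTourProperty.exists_isWeight hm
    exact hu.exists_nonneg

/-- a quasi-metric on a finite set is weightable iff it satisfies
the cyclic tour property. -/
theorem stmt10 {V : Type*} [Fintype V] (m : V → V → ℝ) (hm : IsQuasiMetric m) :
    (∃ u : V → ℝ, (∀ i, 0 ≤ u i) ∧ ∀ i j, m i j + u i = m j i + u j) ↔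
      ∀ i j k, m i j + m j k + m k i = m i k + m k j + m j i :=
  stmt10_general m
end

section
/- For any weighted digraph G with in-forest connectivity d, the group inverse of its Laplacian matrix satisfies L# = (σ_{n-d-1}/σ_{n-d})·(P_{n-d-1} - P_{n-d}), where σ_k is the total weight of in-forests with k arcs and P_k = Q_k/σ_k with Q_k the matrix of weights of k-arc in-forests in which i lies in the tree converging to j. -/
open Finset Relation Matrix
open scoped Classical

/-- `A` is an in-forest of the digraph whose arcs are the nonzero entries of `W`. -/
def IsForestOf {n : ℕ} (W : Matrix (Fin n) (Fin n) ℝ) (A : Finset (Fin n × Fin n)) : Prop :=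
  IsInForest A ∧ ∀ a ∈ A, W a.1 a.2 ≠ 0

/-- The number of arcs in a maximum in-forest of the digraph of `W`. -/
noncomputable def maxForestCard {n : ℕ} (W : Matrix (Fin n) (Fin n) ℝ) : ℕ :=
  (Finset.univ.filter fun A => IsForestOf W A).sup Finset.card

namespace Stmt18Aux

open Relation

variable {n : ℕ}

abbrev Arcs (n : ℕ) := Finset (Fin n × Fin n)

lemma out_unique {A : Arcs n} (hA : IsInForest A) {v a b : Fin n}
    (ha : (v, a) ∈ A) (hb : (v, b) ∈ A) : a = b := by
  have h := hA.2.1 v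
  have ha' : (v, a) ∈ A.filter (fun x => x.1 = v) := by simp [ha]
  have hb' : (v, b) ∈ A.filter (fun x => x.1 = v) := by simp [hb]
  have := Finset.card_le_one.mp h _ ha' _ hb'
  exact congrArg Prod.snd this

lemma forest_subset {A B : Arcs n} (hA : IsInForest A) (hBA : B ⊆ A) : IsInForest B := by
  refine ⟨fun a ha => hA.1 a (hBA ha), fun v => ?_, fun v hv => hA.2.2 v ?_⟩
  · exact le_trans (Finset.card_le_card (Finset.filter_subset_filter _ hBA)) (hA.2.1 v)
  · exact Relation.TransGen.mono (r := arcStep B) (p := arcStep A) (fun x y h => hBA h) v v hv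

lemma reach_mono {A B : Arcs n} (hBA : B ⊆ A) {x y : Fin n}
    (h : ReflTransGen (arcStep B) x y) : ReflTransGen (arcStep A) x y :=
  Relation.ReflTransGen.mono (r := arcStep B) (p := arcStep A) (fun a b hab => hBA hab) x y h

lemma root_reach {A : Arcs n} {r w : Fin n} (hr : IsRootOf A r)
    (h : ReflTransGen (arcStep A) r w) : r = w := by
  rcases h.cases_head with h | ⟨c, hc, _⟩
  · exact h
  · exact absurd rfl (hr (r, c) hc)

lemma reach_step_out {A : Arcs n} (hA : IsInForest A) {v u w : Fin n}
    (hvu : (v, u) ∈ A) (h : ReflTransGen (arcStep A) v w) (hvw : v ≠ w) :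
    ReflTransGen (arcStep A) u w := by
  rcases h.cases_head with h | ⟨c, hc, hcw⟩
  · exact absurd h hvw
  · exact (out_unique hA hvu hc) ▸ hcw

/-- From a common source, reachable vertices are comparable. -/
lemma reach_comparable {A : Arcs n} (hA : IsInForest A) {t x y : Fin n}
    (hx : ReflTransGen (arcStep A) t x) (hy : ReflTransGen (arcStep A) t y) :
    ReflTransGen (arcStep A) x y ∨ ReflTransGen (arcStep A) y x := by
  induction hx using ReflTransGen.head_induction_on with
  | refl => exact Or.inl hy
  | head h' h ih =>
    rename_i a c
    rcases hy.cases_head with h1 | ⟨c', hc', hc'y⟩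
    · exact Or.inr (h1 ▸ (ReflTransGen.head h' h))
    · exact ih ((out_unique hA hc' h') ▸ hc'y)

/-- Deleting one arc: either the path survives, or it passes through the arc's tail. -/
lemma reach_del {A : Arcs n} {a b x y : Fin n} (h : ReflTransGen (arcStep A) x y) :
    ReflTransGen (arcStep (A.erase (a, b))) x y ∨
      (ReflTransGen (arcStep (A.erase (a, b))) x a ∧ ReflTransGen (arcStep A) b y) := by
  induction h using ReflTransGen.head_induction_on with
  | refl => exact Or.inl .refl
  | head h' h ih =>
    rename_i x' c
    by_cases hc : (x', c) = (a, b)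
    · rcases Prod.mk.injEq .. ▸ hc with ⟨h1, h2⟩
      exact Or.inr ⟨h1 ▸ .refl, h2 ▸ h⟩
    · have hmem : (x', c) ∈ A.erase (a, b) := Finset.mem_erase.mpr ⟨hc, h'⟩
      rcases ih with ih | ⟨ih1, ih2⟩
      · exact Or.inl (ih.head hmem)
      · exact Or.inr ⟨ih1.head hmem, ih2⟩

/-- Reaching `i` through `insert (i,t) A` gives a path in `A`. -/
lemma reach_insert_to {A : Arcs n} {i t x : Fin n}
    (h : ReflTransGen (arcStep (insert (i, t) A)) x i) :
    ReflTransGen (arcStep A) x i := by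
  induction h using ReflTransGen.head_induction_on with
  | refl => exact .refl
  | head h' h ih =>
    rename_i x' c
    rcases Finset.mem_insert.mp h' with hc | hc
    · rcases Prod.mk.injEq .. ▸ hc with ⟨h1, _⟩
      exact h1 ▸ .refl
    · exact ih.head hc

/-- Splitting a path in `insert (i,t) A`. -/
lemma reach_insert_split {A : Arcs n} {i t x y : Fin n}
    (h : ReflTransGen (arcStep (insert (i, t) A)) x y) :
    ReflTransGen (arcStep A) x y ∨
      (ReflTransGen (arcStep A) x i ∧ ReflTransGen (arcStep (insert (i, t) A)) t y) := by
  induction h using ReflTransGen.head_induction_on with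
  | refl => exact Or.inl .refl
  | head h' h ih =>
    rename_i x' c
    rcases Finset.mem_insert.mp h' with hc | hc
    · rcases Prod.mk.injEq .. ▸ hc with ⟨h1, h2⟩
      exact Or.inr ⟨h1 ▸ .refl, h2 ▸ h⟩
    · rcases ih with ih | ⟨ih1, ih2⟩
      · exact Or.inl (ih.head hc)
      · exact Or.inr ⟨ih1.head hc, ih2⟩

/-- Adding an out-arc at a vertex with no out-arc keeps the forest property. -/
lemma forest_insert {A : Arcs n} (hA : IsInForest A) {i t : Fin n}
    (hout : ∀ a ∈ A, a.1 ≠ i) (hti : t ≠ i)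
    (hcyc : ¬ ReflTransGen (arcStep A) t i) : IsInForest (insert (i, t) A) := by
  refine ⟨?_, ?_, ?_⟩
  · intro a ha
    rcases Finset.mem_insert.mp ha with h | h
    · exact h ▸ fun he => hti (he.symm)
    · exact hA.1 a h
  · intro v
    rw [Finset.filter_insert]
    by_cases hv : i = v
    · subst hv
      simp only [if_pos rfl]
      have : A.filter (fun a => a.1 = i) = ∅ := by
        refine Finset.filter_eq_empty_iff.mpr fun a ha => hout a ha
      rw [this]
      simp
    · rw [if_neg (by simpa using hv)]
      exact hA.2.1 v
  · intro v hv
    obtain ⟨c, hvc, hcv⟩ := (Relation.TransGen.head'_iff).mp hv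
    rcases Finset.mem_insert.mp hvc with h | h
    · have h1 : v = i := congrArg Prod.fst h
      have h2 : c = t := congrArg Prod.snd h
      exact hcyc (reach_insert_to (h2 ▸ h1 ▸ hcv))
    · rcases reach_insert_split hcv with hc | ⟨hci, htv⟩
      · exact hA.2.2 v (Relation.TransGen.head' h hc)
      · have : ReflTransGen (arcStep (insert (i, t) A)) t i :=
          Relation.ReflTransGen.trans (htv.tail (Finset.mem_insert_of_mem h))
            (reach_mono (Finset.subset_insert _ _) hci)
        exact hcyc (reach_insert_to this)

noncomputable def outv (A : Arcs n) (i : Fin n) : Fin n :=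
  if h : ∃ t, (i, t) ∈ A then h.choose else i

lemma outv_mem {A : Arcs n} {i : Fin n} (h : ∃ t, (i, t) ∈ A) : (i, outv A i) ∈ A := by
  rw [outv, dif_pos h]; exact h.choose_spec

lemma outv_eq {A : Arcs n} (hA : IsInForest A) {i t : Fin n} (ht : (i, t) ∈ A) :
    outv A i = t := out_unique hA (outv_mem ⟨t, ht⟩) ht

lemma exists_out {A : Arcs n} {i r : Fin n} (h : ReflTransGen (arcStep A) i r)
    (hir : i ≠ r) : ∃ t, (i, t) ∈ A := by
  rcases h.cases_head with h | ⟨c, hc, _⟩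
  · exact absurd h hir
  · exact ⟨c, hc⟩

lemma no_cycle_arc {A : Arcs n} (hA : IsInForest A) {u v : Fin n} (huv : (u, v) ∈ A)
    (h : ReflTransGen (arcStep A) v u) : False :=
  hA.2.2 u (Relation.TransGen.head' huv h)

lemma forestWeight_filter (W : Matrix (Fin n) (Fin n) ℝ) (P : Arcs n → Prop) :
    forestWeight W P
      = ∑ A ∈ Finset.univ.filter (fun A => IsInForest A ∧ P A), digraphWeight W A := by
  simp only [forestWeight, Finset.sum_filter]

lemma qF_filter (W : Matrix (Fin n) (Fin n) ℝ) (k : ℕ) (i r : Fin n) :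
    qF W k i r
      = ∑ A ∈ Finset.univ.filter (fun A => IsInForest A ∧ A.card = k ∧ InTreeOf A i r),
          digraphWeight W A := by
  simp only [qF, forestWeight, Finset.sum_filter]
  exact Finset.sum_congr rfl fun x _ => by congr

lemma sigmaF_filter (W : Matrix (Fin n) (Fin n) ℝ) (k : ℕ) :
    sigmaF W k
      = ∑ A ∈ Finset.univ.filter (fun A => IsInForest A ∧ A.card = k), digraphWeight W A := by
  simp only [sigmaF, forestWeight, Finset.sum_filter]
  exact Finset.sum_congr rfl fun x _ => by congr

lemma prod_filter_sum (f : Fin n × Arcs n → ℝ) (P : Fin n × Arcs n → Prop)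
    [DecidablePred P] [∀ t : Fin n, DecidablePred fun A : Arcs n => P (t, A)] :
    ∑ p ∈ (Finset.univ ×ˢ Finset.univ).filter P, f p
      = ∑ t, ∑ A ∈ Finset.univ.filter (fun A => P (t, A)), f (t, A) := by
  rw [Finset.sum_filter, Finset.sum_product]
  simp_rw [Finset.sum_filter]

lemma inTree_self {A : Arcs n} {r : Fin n} : InTreeOf A r r ↔ IsRootOf A r :=
  ⟨fun h => h.1, fun h => ⟨h, .refl⟩⟩

/-- Good pairs `(t,A)` (arc `(i,t)` addable) correspond to `(j+1)`-forests with `i` in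
the tree of `r`. -/
lemma bijGood (W : Matrix (Fin n) (Fin n) ℝ) (j : ℕ) {i r : Fin n} (hir : i ≠ r) :
    ∑ p ∈ ((Finset.univ ×ˢ Finset.univ).filter
        (fun p : Fin n × Arcs n => IsInForest p.2 ∧ p.2.card = j ∧ InTreeOf p.2 p.1 r)).filter
        (fun p => (∀ a ∈ p.2, a.1 ≠ i) ∧ ¬ ReflTransGen (arcStep p.2) p.1 i),
        W i p.1 * digraphWeight W p.2
      = ∑ A ∈ Finset.univ.filter
          (fun A => IsInForest A ∧ A.card = j + 1 ∧ InTreeOf A i r),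
          digraphWeight W A := by
  refine Finset.sum_nbij' (i := fun p : Fin n × Arcs n => insert (i, p.1) p.2)
    (j := fun A => (outv A i, A.erase (i, outv A i))) ?_ ?_ ?_ ?_ ?_
  · rintro ⟨t, A⟩ hp
    obtain ⟨hout, hcyc⟩ := (Finset.mem_filter.mp hp).2
    obtain ⟨hAf, hcard, hTree⟩ := (Finset.mem_filter.mp (Finset.mem_filter.mp hp).1).2
    have hti : t ≠ i := fun h => hcyc (h ▸ .refl)
    have hnm : (i, t) ∉ A := fun h => hout _ h rfl
    refine Finset.mem_filter.mpr ⟨Finset.mem_univ _,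
      forest_insert hAf hout hti hcyc, ?_, ?_, ?_⟩
    · rw [Finset.card_insert_of_notMem hnm, hcard]
    · intro a ha
      rcases Finset.mem_insert.mp ha with h | h
      · rw [h]; exact hir
      · exact hTree.1 a h
    · exact .head (Finset.mem_insert_self _ _) (reach_mono (Finset.subset_insert _ _) hTree.2)
  · intro A hA
    obtain ⟨hAf, hcard, hTree⟩ := (Finset.mem_filter.mp hA).2
    have hex : ∃ t, (i, t) ∈ A := exists_out hTree.2 hir
    have hmem : (i, outv A i) ∈ A := outv_mem hex
    refine Finset.mem_filter.mpr ⟨Finset.mem_filter.mpr ⟨by simp,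
      forest_subset hAf (Finset.erase_subset _ _), ?_, ?_, ?_⟩, ?_, ?_⟩
    · rw [Finset.card_erase_of_mem hmem, hcard]; omega
    · exact fun a ha => hTree.1 a (Finset.mem_of_mem_erase ha)
    · have h1 : ReflTransGen (arcStep A) (outv A i) r := reach_step_out hAf hmem hTree.2 hir
      rcases reach_del (a := i) (b := outv A i) h1 with h | ⟨h, _⟩
      · exact h
      · exact (no_cycle_arc hAf hmem (reach_mono (Finset.erase_subset _ _) h)).elim
    · intro a ha hai
      have hmem2 : (a.1, a.2) ∈ A := Finset.mem_of_mem_erase (by rwa [Prod.mk.eta])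
      rw [hai] at hmem2
      have h2 : a.2 = outv A i := out_unique hAf hmem2 hmem
      exact (Finset.mem_erase.mp ha).1 (by rw [← Prod.mk.eta (p := a), hai, h2])
    · intro h
      exact no_cycle_arc hAf hmem (reach_mono (Finset.erase_subset _ _) h)
  · rintro ⟨t, A⟩ hp
    obtain ⟨hout, hcyc⟩ := (Finset.mem_filter.mp hp).2
    obtain ⟨hAf, hcard, hTree⟩ := (Finset.mem_filter.mp (Finset.mem_filter.mp hp).1).2
    have hti : t ≠ i := fun h => hcyc (h ▸ .refl)
    have hnm : (i, t) ∉ A := fun h => hout _ h rfl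
    have hGf : IsInForest (insert (i, t) A) := forest_insert hAf hout hti hcyc
    have h1 : outv (insert (i, t) A) i = t := outv_eq hGf (Finset.mem_insert_self _ _)
    simp only [h1, Finset.erase_insert hnm]
  · intro A hA
    obtain ⟨hAf, hcard, hTree⟩ := (Finset.mem_filter.mp hA).2
    have hmem : (i, outv A i) ∈ A := outv_mem (exists_out hTree.2 hir)
    exact Finset.insert_erase hmem
  · rintro ⟨t, A⟩ hp
    obtain ⟨hout, hcyc⟩ := (Finset.mem_filter.mp hp).2
    have hnm : (i, t) ∉ A := fun h => hout _ h rfl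
    rw [digraphWeight, digraphWeight, Finset.prod_insert hnm]

/-- Bad pairs correspond to pairs `(s,A')` with `i` in the tree of `r`. -/
lemma bijBad (W : Matrix (Fin n) (Fin n) ℝ) (j : ℕ) {i r : Fin n} (hir : i ≠ r) :
    ∑ p ∈ ((Finset.univ ×ˢ Finset.univ).filter
        (fun p : Fin n × Arcs n => IsInForest p.2 ∧ p.2.card = j ∧ InTreeOf p.2 p.1 r)).filter
        (fun p => ¬((∀ a ∈ p.2, a.1 ≠ i) ∧ ¬ ReflTransGen (arcStep p.2) p.1 i)),
        W i p.1 * digraphWeight W p.2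
      = ∑ p ∈ (Finset.univ ×ˢ Finset.univ).filter
          (fun p : Fin n × Arcs n => IsInForest p.2 ∧ p.2.card = j ∧ InTreeOf p.2 i r),
          W i p.1 * digraphWeight W p.2 := by
  set swap : Fin n × Arcs n → Fin n × Arcs n := fun p =>
    if ReflTransGen (arcStep p.2) p.1 i then p
    else (outv p.2 i, insert (i, p.1) (p.2.erase (i, outv p.2 i))) with hswap
  refine Finset.sum_nbij' (i := swap) (j := swap) ?_ ?_ ?_ ?_ ?_
  · rintro ⟨t, A⟩ hp
    have hbad := (Finset.mem_filter.mp hp).2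
    obtain ⟨hAf, hcard, hTree⟩ := (Finset.mem_filter.mp (Finset.mem_filter.mp hp).1).2
    by_cases hti : ReflTransGen (arcStep A) t i
    · rw [hswap]
      simp only [if_pos hti]
      refine Finset.mem_filter.mpr ⟨by simp, hAf, hcard, hTree.1, ?_⟩
      rcases reach_comparable hAf hti hTree.2 with h | h
      · exact h
      · exact ((hir (root_reach hTree.1 h).symm).elim)
    · have hexa : ¬ (∀ a ∈ A, a.1 ≠ i) := fun hno => hbad ⟨hno, hti⟩
      push_neg at hexa
      obtain ⟨a, haA, hai⟩ := hexa
      have hex : ∃ u, (i, u) ∈ A := ⟨a.2, by rwa [← hai, Prod.mk.eta]⟩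
      have hmem : (i, outv A i) ∈ A := outv_mem hex
      have htine : t ≠ i := fun h => hti (h ▸ .refl)
      have houtB : ∀ b ∈ A.erase (i, outv A i), b.1 ≠ i := by
        intro b hb hbi
        have hmem2 : (b.1, b.2) ∈ A := Finset.mem_of_mem_erase (by rwa [Prod.mk.eta])
        rw [hbi] at hmem2
        exact (Finset.mem_erase.mp hb).1
          (by rw [← Prod.mk.eta (p := b), hbi, out_unique hAf hmem2 hmem])
      have hcycB : ¬ ReflTransGen (arcStep (A.erase (i, outv A i))) t i :=
        fun h => hti (reach_mono (Finset.erase_subset _ _) h)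
      have hA'f : IsInForest (insert (i, t) (A.erase (i, outv A i))) :=
        forest_insert (forest_subset hAf (Finset.erase_subset _ _)) houtB htine hcycB
      have hnmB : (i, t) ∉ A.erase (i, outv A i) := fun h => houtB _ h rfl
      rw [hswap]
      simp only [if_neg hti]
      refine Finset.mem_filter.mpr ⟨by simp, hA'f, ?_, ?_, ?_⟩
      · have hpos : 0 < A.card := Finset.card_pos.mpr ⟨_, hmem⟩
        have hc2 : A.card = j := hcard
        rw [Finset.card_insert_of_notMem hnmB, Finset.card_erase_of_mem hmem]
        omega
      · intro b hb
        rcases Finset.mem_insert.mp hb with h | h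
        · rw [h]; exact hir
        · exact hTree.1 b (Finset.mem_of_mem_erase h)
      · refine .head (Finset.mem_insert_self _ _) ?_
        rcases reach_del (a := i) (b := outv A i) hTree.2 with h | ⟨h, _⟩
        · exact reach_mono (Finset.subset_insert _ _) h
        · exact (hti (reach_mono (Finset.erase_subset _ _) h)).elim
  · rintro ⟨s, A'⟩ hp
    obtain ⟨hA'f, hcard', hTree'⟩ := (Finset.mem_filter.mp hp).2
    by_cases hsi : ReflTransGen (arcStep A') s i
    · rw [hswap]
      simp only [if_pos hsi]
      refine Finset.mem_filter.mpr ⟨Finset.mem_filter.mpr ⟨by simp, hA'f, hcard',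
        hTree'.1, hsi.trans hTree'.2⟩, fun hgood => hgood.2 hsi⟩
    · have hex : ∃ t, (i, t) ∈ A' := exists_out hTree'.2 hir
      have hmem' : (i, outv A' i) ∈ A' := outv_mem hex
      have hsine : s ≠ i := fun h => hsi (h ▸ .refl)
      have houtB : ∀ b ∈ A'.erase (i, outv A' i), b.1 ≠ i := by
        intro b hb hbi
        have hmem2 : (b.1, b.2) ∈ A' := Finset.mem_of_mem_erase (by rwa [Prod.mk.eta])
        rw [hbi] at hmem2
        exact (Finset.mem_erase.mp hb).1
          (by rw [← Prod.mk.eta (p := b), hbi, out_unique hA'f hmem2 hmem'])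
      have hcycB : ¬ ReflTransGen (arcStep (A'.erase (i, outv A' i))) s i :=
        fun h => hsi (reach_mono (Finset.erase_subset _ _) h)
      have hFf : IsInForest (insert (i, s) (A'.erase (i, outv A' i))) :=
        forest_insert (forest_subset hA'f (Finset.erase_subset _ _)) houtB hsine hcycB
      have hnmB : (i, s) ∉ A'.erase (i, outv A' i) := fun h => houtB _ h rfl
      rw [hswap]
      simp only [if_neg hsi]
      refine Finset.mem_filter.mpr ⟨Finset.mem_filter.mpr ⟨by simp, hFf, ?_, ?_, ?_⟩, ?_⟩
      · have hpos : 0 < A'.card := Finset.card_pos.mpr ⟨_, hmem'⟩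
        have hc2 : A'.card = j := hcard'
        rw [Finset.card_insert_of_notMem hnmB, Finset.card_erase_of_mem hmem']
        omega
      · intro b hb
        rcases Finset.mem_insert.mp hb with h | h
        · rw [h]; exact hir
        · exact hTree'.1 b (Finset.mem_of_mem_erase h)
      · have h1 : ReflTransGen (arcStep A') (outv A' i) r :=
          reach_step_out hA'f hmem' hTree'.2 hir
        rcases reach_del (a := i) (b := outv A' i) h1 with h | ⟨h, _⟩
        · exact reach_mono (Finset.subset_insert _ _) h
        · exact (no_cycle_arc hA'f hmem' (reach_mono (Finset.erase_subset _ _) h)).elim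
      · exact fun hgood => hgood.1 (i, s) (Finset.mem_insert_self _ _) rfl
  · rintro ⟨t, A⟩ hp
    have hbad := (Finset.mem_filter.mp hp).2
    obtain ⟨hAf, hcard, hTree⟩ := (Finset.mem_filter.mp (Finset.mem_filter.mp hp).1).2
    by_cases hti : ReflTransGen (arcStep A) t i
    · rw [hswap]; simp only [if_pos hti]
    · have hexa : ¬ (∀ a ∈ A, a.1 ≠ i) := fun hno => hbad ⟨hno, hti⟩
      push_neg at hexa
      obtain ⟨a, haA, hai⟩ := hexa
      have hex : ∃ u, (i, u) ∈ A := ⟨a.2, by rwa [← hai, Prod.mk.eta]⟩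
      have hmem : (i, outv A i) ∈ A := outv_mem hex
      have htine : t ≠ i := fun h => hti (h ▸ .refl)
      have houtB : ∀ b ∈ A.erase (i, outv A i), b.1 ≠ i := by
        intro b hb hbi
        have hmem2 : (b.1, b.2) ∈ A := Finset.mem_of_mem_erase (by rwa [Prod.mk.eta])
        rw [hbi] at hmem2
        exact (Finset.mem_erase.mp hb).1
          (by rw [← Prod.mk.eta (p := b), hbi, out_unique hAf hmem2 hmem])
      have hcycB : ¬ ReflTransGen (arcStep (A.erase (i, outv A i))) t i :=
        fun h => hti (reach_mono (Finset.erase_subset _ _) h)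
      have hA'f : IsInForest (insert (i, t) (A.erase (i, outv A i))) :=
        forest_insert (forest_subset hAf (Finset.erase_subset _ _)) houtB htine hcycB
      have hnmB : (i, t) ∉ A.erase (i, outv A i) := fun h => houtB _ h rfl
      have hcond : ¬ ReflTransGen
          (arcStep (insert (i, t) (A.erase (i, outv A i)))) (outv A i) i := by
        intro h
        exact no_cycle_arc hAf hmem (reach_mono (Finset.erase_subset _ _) (reach_insert_to h))
      rw [hswap]
      simp only [if_neg hti]
      simp only [if_neg hcond]
      have h1 : outv (insert (i, t) (A.erase (i, outv A i))) i = t :=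
        outv_eq hA'f (Finset.mem_insert_self _ _)
      rw [h1, Finset.erase_insert hnmB, Finset.insert_erase hmem]
  · rintro ⟨s, A'⟩ hp
    obtain ⟨hA'f, hcard', hTree'⟩ := (Finset.mem_filter.mp hp).2
    by_cases hsi : ReflTransGen (arcStep A') s i
    · rw [hswap]; simp only [if_pos hsi]
    · have hex : ∃ t, (i, t) ∈ A' := exists_out hTree'.2 hir
      have hmem' : (i, outv A' i) ∈ A' := outv_mem hex
      have hsine : s ≠ i := fun h => hsi (h ▸ .refl)
      have houtB : ∀ b ∈ A'.erase (i, outv A' i), b.1 ≠ i := by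
        intro b hb hbi
        have hmem2 : (b.1, b.2) ∈ A' := Finset.mem_of_mem_erase (by rwa [Prod.mk.eta])
        rw [hbi] at hmem2
        exact (Finset.mem_erase.mp hb).1
          (by rw [← Prod.mk.eta (p := b), hbi, out_unique hA'f hmem2 hmem'])
      have hcycB : ¬ ReflTransGen (arcStep (A'.erase (i, outv A' i))) s i :=
        fun h => hsi (reach_mono (Finset.erase_subset _ _) h)
      have hFf : IsInForest (insert (i, s) (A'.erase (i, outv A' i))) :=
        forest_insert (forest_subset hA'f (Finset.erase_subset _ _)) houtB hsine hcycB
      have hnmB : (i, s) ∉ A'.erase (i, outv A' i) := fun h => houtB _ h rfl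
      have hcond : ¬ ReflTransGen
          (arcStep (insert (i, s) (A'.erase (i, outv A' i)))) (outv A' i) i := by
        intro h
        exact no_cycle_arc hA'f hmem' (reach_mono (Finset.erase_subset _ _) (reach_insert_to h))
      rw [hswap]
      simp only [if_neg hsi]
      simp only [if_neg hcond]
      have h1 : outv (insert (i, s) (A'.erase (i, outv A' i))) i = s :=
        outv_eq hFf (Finset.mem_insert_self _ _)
      rw [h1, Finset.erase_insert hnmB, Finset.insert_erase hmem']
  · rintro ⟨t, A⟩ hp
    have hbad := (Finset.mem_filter.mp hp).2
    obtain ⟨hAf, hcard, hTree⟩ := (Finset.mem_filter.mp (Finset.mem_filter.mp hp).1).2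
    by_cases hti : ReflTransGen (arcStep A) t i
    · rw [hswap]; simp only [if_pos hti]
    · have hexa : ¬ (∀ a ∈ A, a.1 ≠ i) := fun hno => hbad ⟨hno, hti⟩
      push_neg at hexa
      obtain ⟨a, haA, hai⟩ := hexa
      have hex : ∃ u, (i, u) ∈ A := ⟨a.2, by rwa [← hai, Prod.mk.eta]⟩
      have hmem : (i, outv A i) ∈ A := outv_mem hex
      have houtB : ∀ b ∈ A.erase (i, outv A i), b.1 ≠ i := by
        intro b hb hbi
        have hmem2 : (b.1, b.2) ∈ A := Finset.mem_of_mem_erase (by rwa [Prod.mk.eta])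
        rw [hbi] at hmem2
        exact (Finset.mem_erase.mp hb).1
          (by rw [← Prod.mk.eta (p := b), hbi, out_unique hAf hmem2 hmem])
      have hnmB : (i, t) ∉ A.erase (i, outv A i) := fun h => houtB _ h rfl
      rw [hswap]
      simp only [if_neg hti]
      show W i t * digraphWeight W A
        = W i (outv A i) * digraphWeight W (insert (i, t) (A.erase (i, outv A i)))
      rw [digraphWeight, digraphWeight, Finset.prod_insert hnmB,
        ← Finset.mul_prod_erase _ _ hmem]
      ring

lemma caseA (W : Matrix (Fin n) (Fin n) ℝ) (j : ℕ) {i r : Fin n} (hir : i ≠ r) :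
    ∑ t, W i t * qF W j t r = (∑ t, W i t) * qF W j i r + qF W (j + 1) i r := by
  have e1 : ∑ t, W i t * qF W j t r
      = ∑ p ∈ (Finset.univ ×ˢ Finset.univ).filter
          (fun p : Fin n × Arcs n => IsInForest p.2 ∧ p.2.card = j ∧ InTreeOf p.2 p.1 r),
          W i p.1 * digraphWeight W p.2 := by
    have h := prod_filter_sum (n := n) (fun p => W i p.1 * digraphWeight W p.2)
      (fun p : Fin n × Arcs n => IsInForest p.2 ∧ p.2.card = j ∧ InTreeOf p.2 p.1 r)
    rw [h]
    refine Finset.sum_congr rfl fun t _ => ?_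
    rw [qF_filter, Finset.mul_sum]
  have e2 : ∑ p ∈ (Finset.univ ×ˢ Finset.univ).filter
          (fun p : Fin n × Arcs n => IsInForest p.2 ∧ p.2.card = j ∧ InTreeOf p.2 i r),
          W i p.1 * digraphWeight W p.2
      = (∑ t, W i t) * qF W j i r := by
    have h := prod_filter_sum (n := n) (fun p => W i p.1 * digraphWeight W p.2)
      (fun p : Fin n × Arcs n => IsInForest p.2 ∧ p.2.card = j ∧ InTreeOf p.2 i r)
    rw [h, Finset.sum_mul]
    refine Finset.sum_congr rfl fun t _ => ?_
    rw [qF_filter, Finset.mul_sum]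
  rw [e1, ← Finset.sum_filter_add_sum_filter_not ((Finset.univ ×ˢ Finset.univ).filter
      (fun p : Fin n × Arcs n => IsInForest p.2 ∧ p.2.card = j ∧ InTreeOf p.2 p.1 r))
      (fun p => (∀ a ∈ p.2, a.1 ≠ i) ∧ ¬ ReflTransGen (arcStep p.2) p.1 i),
    bijGood W j hir, bijBad W j hir, e2, ← qF_filter]
  ring

lemma bijB (W : Matrix (Fin n) (Fin n) ℝ) (j : ℕ) (r : Fin n) :
    ∑ A ∈ (Finset.univ.filter (fun A : Arcs n => IsInForest A ∧ A.card = j + 1)).filter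
        (fun A => ¬ IsRootOf A r), digraphWeight W A
      = ∑ p ∈ (Finset.univ ×ˢ Finset.univ).filter
          (fun p : Fin n × Arcs n => IsInForest p.2 ∧ p.2.card = j ∧ IsRootOf p.2 r ∧
            ¬ ReflTransGen (arcStep p.2) p.1 r),
          W r p.1 * digraphWeight W p.2 := by
  refine Finset.sum_nbij' (i := fun A => (outv A r, A.erase (r, outv A r)))
    (j := fun p : Fin n × Arcs n => insert (r, p.1) p.2) ?_ ?_ ?_ ?_ ?_
  · intro A hA
    have hnroot := (Finset.mem_filter.mp hA).2
    obtain ⟨hAf, hcard⟩ := (Finset.mem_filter.mp (Finset.mem_filter.mp hA).1).2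
    have hexa : ¬ (∀ a ∈ A, a.1 ≠ r) := hnroot
    push_neg at hexa
    obtain ⟨a, haA, har⟩ := hexa
    have hmem : (r, outv A r) ∈ A := outv_mem ⟨a.2, by rwa [← har, Prod.mk.eta]⟩
    refine Finset.mem_filter.mpr ⟨by simp,
      forest_subset hAf (Finset.erase_subset _ _), ?_, ?_, ?_⟩
    · have hc2 : A.card = j + 1 := hcard
      rw [Finset.card_erase_of_mem hmem]; omega
    · intro b hb hbr
      have hmem2 : (b.1, b.2) ∈ A := Finset.mem_of_mem_erase (by rwa [Prod.mk.eta])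
      rw [hbr] at hmem2
      exact (Finset.mem_erase.mp hb).1
        (by rw [← Prod.mk.eta (p := b), hbr, out_unique hAf hmem2 hmem])
    · intro h
      exact no_cycle_arc hAf hmem (reach_mono (Finset.erase_subset _ _) h)
  · rintro ⟨t, F⟩ hp
    obtain ⟨hFf, hcard, hroot, hcyc⟩ := (Finset.mem_filter.mp hp).2
    have htr : t ≠ r := fun h => hcyc (h ▸ .refl)
    have hnm : (r, t) ∉ F := fun h => hroot _ h rfl
    refine Finset.mem_filter.mpr ⟨Finset.mem_filter.mpr ⟨Finset.mem_univ _,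
      forest_insert hFf hroot htr hcyc, ?_⟩, ?_⟩
    · rw [Finset.card_insert_of_notMem hnm, hcard]
    · intro hroot'
      exact hroot' (r, t) (Finset.mem_insert_self _ _) rfl
  · intro A hA
    have hnroot := (Finset.mem_filter.mp hA).2
    obtain ⟨hAf, hcard⟩ := (Finset.mem_filter.mp (Finset.mem_filter.mp hA).1).2
    have hexa : ¬ (∀ a ∈ A, a.1 ≠ r) := hnroot
    push_neg at hexa
    obtain ⟨a, haA, har⟩ := hexa
    have hmem : (r, outv A r) ∈ A := outv_mem ⟨a.2, by rwa [← har, Prod.mk.eta]⟩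
    exact Finset.insert_erase hmem
  · rintro ⟨t, F⟩ hp
    obtain ⟨hFf, hcard, hroot, hcyc⟩ := (Finset.mem_filter.mp hp).2
    have htr : t ≠ r := fun h => hcyc (h ▸ .refl)
    have hnm : (r, t) ∉ F := fun h => hroot _ h rfl
    have hGf : IsInForest (insert (r, t) F) := forest_insert hFf hroot htr hcyc
    have h1 : outv (insert (r, t) F) r = t := outv_eq hGf (Finset.mem_insert_self _ _)
    simp only [h1, Finset.erase_insert hnm]
  · intro A hA
    have hnroot := (Finset.mem_filter.mp hA).2
    obtain ⟨hAf, hcard⟩ := (Finset.mem_filter.mp (Finset.mem_filter.mp hA).1).2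
    have hexa : ¬ (∀ a ∈ A, a.1 ≠ r) := hnroot
    push_neg at hexa
    obtain ⟨a, haA, har⟩ := hexa
    have hmem : (r, outv A r) ∈ A := outv_mem ⟨a.2, by rwa [← har, Prod.mk.eta]⟩
    show digraphWeight W A = W r (outv A r) * digraphWeight W (A.erase (r, outv A r))
    rw [digraphWeight, digraphWeight, ← Finset.mul_prod_erase _ _ hmem]

lemma caseB (W : Matrix (Fin n) (Fin n) ℝ) (j : ℕ) (r : Fin n) :
    ∑ t, W r t * qF W j t r
      = (∑ t, W r t) * qF W j r r + qF W (j + 1) r r - sigmaF W (j + 1) := by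
  have hsplit : sigmaF W (j + 1)
      = qF W (j + 1) r r + ∑ A ∈ (Finset.univ.filter
          (fun A : Arcs n => IsInForest A ∧ A.card = j + 1)).filter
          (fun A => ¬ IsRootOf A r), digraphWeight W A := by
    rw [sigmaF_filter, ← Finset.sum_filter_add_sum_filter_not
      (Finset.univ.filter (fun A : Arcs n => IsInForest A ∧ A.card = j + 1))
      (fun A => IsRootOf A r)]
    congr 1
    rw [qF_filter]
    refine Finset.sum_congr ?_ fun _ _ => rfl
    ext A
    simp only [Finset.mem_filter, Finset.mem_univ, true_and]
    constructor
    · rintro ⟨⟨h1, h2⟩, h3⟩; exact ⟨h1, h2, inTree_self.mpr h3⟩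
    · rintro ⟨h1, h2, h3⟩; exact ⟨⟨h1, h2⟩, h3.1⟩
  have hq1 : qF W j r r = ∑ A ∈ Finset.univ.filter
      (fun A : Arcs n => IsInForest A ∧ A.card = j ∧ IsRootOf A r), digraphWeight W A := by
    rw [qF_filter]
    refine Finset.sum_congr ?_ fun _ _ => rfl
    ext A
    simp only [Finset.mem_filter, Finset.mem_univ, true_and]
    exact ⟨fun ⟨h1, h2, h3⟩ => ⟨h1, h2, h3.1⟩, fun ⟨h1, h2, h3⟩ => ⟨h1, h2, inTree_self.mpr h3⟩⟩
  have hper : ∀ t : Fin n, W r t * qF W j r r - W r t * qF W j t r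
      = ∑ A ∈ Finset.univ.filter (fun A : Arcs n => IsInForest A ∧ A.card = j ∧ IsRootOf A r ∧
          ¬ ReflTransGen (arcStep A) t r), W r t * digraphWeight W A := by
    intro t
    have hq2 : qF W j t r = ∑ A ∈ (Finset.univ.filter
        (fun A : Arcs n => IsInForest A ∧ A.card = j ∧ IsRootOf A r)).filter
        (fun A => ReflTransGen (arcStep A) t r), digraphWeight W A := by
      rw [qF_filter]
      refine Finset.sum_congr ?_ fun _ _ => rfl
      ext A
      simp only [Finset.mem_filter, Finset.mem_univ, true_and]
      exact ⟨fun ⟨h1, h2, h3⟩ => ⟨⟨h1, h2, h3.1⟩, h3.2⟩,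
        fun ⟨⟨h1, h2, h3⟩, h4⟩ => ⟨h1, h2, h3, h4⟩⟩
    have hset : Finset.univ.filter (fun A : Arcs n => IsInForest A ∧ A.card = j ∧ IsRootOf A r ∧
          ¬ ReflTransGen (arcStep A) t r)
        = (Finset.univ.filter
            (fun A : Arcs n => IsInForest A ∧ A.card = j ∧ IsRootOf A r)).filter
            (fun A => ¬ ReflTransGen (arcStep A) t r) := by
      ext A
      simp only [Finset.mem_filter, Finset.mem_univ, true_and]
      exact ⟨fun ⟨h1, h2, h3, h4⟩ => ⟨⟨h1, h2, h3⟩, h4⟩,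
        fun ⟨⟨h1, h2, h3⟩, h4⟩ => ⟨h1, h2, h3, h4⟩⟩
    rw [hq1, hq2, hset, ← Finset.mul_sum, ← mul_sub]
    congr 1
    rw [← Finset.sum_filter_add_sum_filter_not
      (Finset.univ.filter (fun A : Arcs n => IsInForest A ∧ A.card = j ∧ IsRootOf A r))
      (fun A => ReflTransGen (arcStep A) t r) (digraphWeight W)]
    ring
  have hbadsum : ∑ A ∈ (Finset.univ.filter
        (fun A : Arcs n => IsInForest A ∧ A.card = j + 1)).filter
        (fun A => ¬ IsRootOf A r), digraphWeight W A
      = ∑ t, (W r t * qF W j r r - W r t * qF W j t r) := by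
    have h := prod_filter_sum (n := n) (fun p => W r p.1 * digraphWeight W p.2)
      (fun p : Fin n × Arcs n => IsInForest p.2 ∧ p.2.card = j ∧ IsRootOf p.2 r ∧
        ¬ ReflTransGen (arcStep p.2) p.1 r)
    rw [bijB W j r, h]
    refine Finset.sum_congr rfl fun t _ => ?_
    rw [hper t]
  rw [Finset.sum_sub_distrib, ← Finset.sum_mul] at hbadsum
  rw [hbadsum] at hsplit
  linarith [hsplit]

lemma forest_empty : IsInForest (∅ : Arcs n) := by
  refine ⟨by simp, by simp, fun v hv => ?_⟩
  obtain ⟨c, hc, -⟩ := (Relation.TransGen.head'_iff).mp hv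
  exact Finset.notMem_empty _ hc

lemma reach_empty {x y : Fin n} (h : ReflTransGen (arcStep (∅ : Arcs n)) x y) : x = y := by
  rcases h.cases_head with h | ⟨c, hc, -⟩
  · exact h
  · exact absurd hc (Finset.notMem_empty _)

noncomputable def Qmat (W : Matrix (Fin n) (Fin n) ℝ) (k : ℕ) : Matrix (Fin n) (Fin n) ℝ :=
  Matrix.of fun i j => qF W k i j

lemma sigmaF_zero (W : Matrix (Fin n) (Fin n) ℝ) : sigmaF W 0 = 1 := by
  rw [sigmaF_filter]
  have h : Finset.univ.filter (fun A : Arcs n => IsInForest A ∧ A.card = 0) = {∅} := by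
    ext A
    simp only [Finset.mem_filter, Finset.mem_univ, true_and, Finset.mem_singleton,
      Finset.card_eq_zero]
    exact ⟨fun h => h.2, fun h => ⟨h ▸ forest_empty, h⟩⟩
  rw [h, Finset.sum_singleton, digraphWeight, Finset.prod_empty]

lemma qF_zero (W : Matrix (Fin n) (Fin n) ℝ) (i j : Fin n) :
    qF W 0 i j = if i = j then 1 else 0 := by
  rw [qF_filter]
  by_cases hij : i = j
  · subst hij
    rw [if_pos rfl]
    have h : Finset.univ.filter
        (fun A : Arcs n => IsInForest A ∧ A.card = 0 ∧ InTreeOf A i i) = {∅} := by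
      ext A
      simp only [Finset.mem_filter, Finset.mem_univ, true_and, Finset.mem_singleton,
        Finset.card_eq_zero]
      constructor
      · exact fun h => h.2.1
      · rintro rfl
        exact ⟨forest_empty, rfl, ⟨fun a ha => absurd ha (Finset.notMem_empty _), .refl⟩⟩
    rw [h, Finset.sum_singleton, digraphWeight, Finset.prod_empty]
  · rw [if_neg hij]
    apply Finset.sum_eq_zero
    intro A hA
    obtain ⟨-, hc, hT⟩ := (Finset.mem_filter.mp hA).2
    exact absurd (reach_empty (Finset.card_eq_zero.mp hc ▸ hT.2)) hij

lemma Qmat_zero (W : Matrix (Fin n) (Fin n) ℝ) : Qmat W 0 = 1 := by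
  ext i j
  rw [Qmat, Matrix.of_apply, qF_zero, Matrix.one_apply]

lemma lap_mul_Q (W : Matrix (Fin n) (Fin n) ℝ) (k : ℕ) :
    lap W * Qmat W k = sigmaF W (k + 1) • (1 : Matrix (Fin n) (Fin n) ℝ) - Qmat W (k + 1) := by
  ext i r
  simp only [Matrix.mul_apply, lap, Matrix.sub_apply, Matrix.smul_apply, Matrix.one_apply,
    Qmat, Matrix.of_apply, Matrix.diagonal_apply, smul_eq_mul, sub_mul, ite_mul, zero_mul]
  rw [Finset.sum_sub_distrib, Finset.sum_ite_eq, if_pos (Finset.mem_univ i)]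
  by_cases hir : i = r
  · subst hir
    rw [caseB W k i, if_pos rfl]
    ring
  · rw [caseA W k hir, if_neg hir]
    ring

lemma weight_zero {W : Matrix (Fin n) (Fin n) ℝ} {A : Arcs n} (hA : IsInForest A)
    (h : maxForestCard W < A.card) : digraphWeight W A = 0 := by
  by_contra h0
  have hne : ∀ a ∈ A, W a.1 a.2 ≠ 0 := fun a ha hz => h0 (Finset.prod_eq_zero ha hz)
  have hle : A.card ≤ maxForestCard W :=
    Finset.le_sup (f := Finset.card) (Finset.mem_filter.mpr ⟨Finset.mem_univ _, hA, hne⟩)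
  omega

lemma sigmaF_hi (W : Matrix (Fin n) (Fin n) ℝ) {k : ℕ} (hk : maxForestCard W < k) :
    sigmaF W k = 0 := by
  rw [sigmaF_filter]
  apply Finset.sum_eq_zero
  intro A hA
  obtain ⟨hf, hc⟩ := (Finset.mem_filter.mp hA).2
  exact weight_zero hf (hc ▸ hk)

lemma Qmat_hi (W : Matrix (Fin n) (Fin n) ℝ) {k : ℕ} (hk : maxForestCard W < k) :
    Qmat W k = 0 := by
  ext i j
  rw [Qmat, Matrix.of_apply, qF_filter, Matrix.zero_apply]
  apply Finset.sum_eq_zero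
  intro A hA
  obtain ⟨hf, hc, -⟩ := (Finset.mem_filter.mp hA).2
  exact weight_zero hf (hc ▸ hk)

lemma exists_max_forest (W : Matrix (Fin n) (Fin n) ℝ) :
    ∃ A : Arcs n, IsForestOf W A ∧ A.card = maxForestCard W := by
  have hne : (Finset.univ.filter (fun A : Arcs n => IsForestOf W A)).Nonempty :=
    ⟨∅, Finset.mem_filter.mpr ⟨Finset.mem_univ _, forest_empty, by simp⟩⟩
  obtain ⟨A, hA, hs⟩ := Finset.exists_mem_eq_sup _ hne Finset.card
  exact ⟨A, (Finset.mem_filter.mp hA).2, hs.symm⟩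

lemma sigmaF_pos {W : Matrix (Fin n) (Fin n) ℝ} (hWnn : ∀ i j, 0 ≤ W i j) {k : ℕ}
    (hk : ∃ A : Arcs n, IsForestOf W A ∧ A.card = k) : 0 < sigmaF W k := by
  obtain ⟨A0, hF, hc⟩ := hk
  rw [sigmaF_filter]
  refine Finset.sum_pos' (fun A _ => Finset.prod_nonneg fun a _ => hWnn _ _)
    ⟨A0, Finset.mem_filter.mpr ⟨Finset.mem_univ _, hF.1, hc⟩,
      Finset.prod_pos fun a ha => lt_of_le_of_ne (hWnn _ _) (Ne.symm (hF.2 a ha))⟩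

lemma forest_card_le {A : Arcs n} (hA : IsInForest A) : A.card ≤ n := by
  have h : A.card ≤ (Finset.univ : Finset (Fin n)).card := by
    apply Finset.card_le_card_of_injOn Prod.fst (fun a _ => Finset.mem_univ a.1)
    intro a ha b hb hab
    have ha' : (a.1, a.2) ∈ A := by rw [Prod.mk.eta]; exact ha
    have hb' : (a.1, b.2) ∈ A := by rw [hab, Prod.mk.eta]; exact hb
    exact Prod.ext hab (out_unique hA ha' hb')
  simpa using h

lemma maxForestCard_le (W : Matrix (Fin n) (Fin n) ℝ) : maxForestCard W ≤ n :=
  Finset.sup_le fun A hA => forest_card_le (Finset.mem_filter.mp hA).2.1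

lemma gi_unique {L X Y : Matrix (Fin n) (Fin n) ℝ}
    (hX : IsGroupInverse L X) (hY : IsGroupInverse L Y) : X = Y := by
  obtain ⟨hX1, hX2, hX3⟩ := hX
  obtain ⟨hY1, hY2, hY3⟩ := hY
  have e1 : X = X * X * L := by
    conv_lhs => rw [← hX2]
    rw [Matrix.mul_assoc X L X, hX3, ← Matrix.mul_assoc]
  have e2 : Y = L * Y * Y := by
    conv_lhs => rw [← hY2]
    rw [← hY3]
  have e3 : X = X * (L * Y) := by
    calc X = X * X * L := e1
      _ = X * X * (L * Y * L) := by rw [hY1]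
      _ = X * X * L * (Y * L) := by
          rw [Matrix.mul_assoc L Y L, ← Matrix.mul_assoc (X * X) L (Y * L)]
      _ = X * (Y * L) := by rw [← e1]
      _ = X * (L * Y) := by rw [hY3]
  have e4 : Y = L * X * Y := by
    calc Y = L * Y * Y := e2
      _ = L * X * L * Y * Y := by rw [hX1]
      _ = L * X * (L * Y * Y) := by
          rw [Matrix.mul_assoc (L * X) L Y, Matrix.mul_assoc (L * X) (L * Y) Y,
            Matrix.mul_assoc L Y Y]
      _ = L * X * Y := by rw [← e2]
  calc X = X * (L * Y) := e3
    _ = X * L * Y := by rw [← Matrix.mul_assoc]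
    _ = L * X * Y := by rw [hX3]
    _ = Y := e4.symm

lemma Q_rec (W : Matrix (Fin n) (Fin n) ℝ) (k : ℕ) :
    Qmat W (k + 1) = sigmaF W (k + 1) • (1 : Matrix (Fin n) (Fin n) ℝ) - lap W * Qmat W k := by
  rw [lap_mul_Q, sub_sub_cancel]

lemma lap_comm_Q (W : Matrix (Fin n) (Fin n) ℝ) :
    ∀ k, lap W * Qmat W k = Qmat W k * lap W := by
  intro k
  induction k with
  | zero => rw [Qmat_zero, mul_one, one_mul]
  | succ k ih =>
    rw [Q_rec, mul_sub, sub_mul, Matrix.mul_smul, Matrix.smul_mul, mul_one, one_mul,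
      Matrix.mul_assoc, ← ih, ← Matrix.mul_assoc]

lemma Q_comm (W : Matrix (Fin n) (Fin n) ℝ) (m : ℕ) :
    ∀ k, Qmat W k * Qmat W m = Qmat W m * Qmat W k := by
  intro k
  induction k with
  | zero => rw [Qmat_zero, mul_one, one_mul]
  | succ k ih =>
    rw [Q_rec, mul_sub, sub_mul, Matrix.mul_smul, Matrix.smul_mul, mul_one, one_mul,
      Matrix.mul_assoc (lap W), ih, ← Matrix.mul_assoc, lap_comm_Q W m, Matrix.mul_assoc]

lemma QQ_top (W : Matrix (Fin n) (Fin n) ℝ) {m : ℕ} (hm : lap W * Qmat W m = 0) :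
    ∀ k, Qmat W k * Qmat W m = sigmaF W k • Qmat W m := by
  intro k
  induction k with
  | zero => rw [Qmat_zero, one_mul, sigmaF_zero, one_smul]
  | succ k ih =>
    rw [Q_rec, sub_mul, Matrix.smul_mul, one_mul, Matrix.mul_assoc, ih,
      Matrix.mul_smul, hm, smul_zero, sub_zero]

theorem stmt18_aux {n : ℕ} (hn : 1 ≤ n) (W : Matrix (Fin n) (Fin n) ℝ)
    (hWnn : ∀ i j, 0 ≤ W i j) (hW0 : ∀ i, W i i = 0)
    (d : ℕ) (hd : d = n - maxForestCard W)
    (X : Matrix (Fin n) (Fin n) ℝ) (hX : IsGroupInverse (lap W) X) :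
    X = (sigmaF W (n - d - 1) / sigmaF W (n - d)) •
        ((sigmaF W (n - d - 1))⁻¹ • Matrix.of (fun i j => qF W (n - d - 1) i j) -
         (sigmaF W (n - d))⁻¹ • Matrix.of (fun i j => qF W (n - d) i j)) := by
  classical
  have hQdef : ∀ k : ℕ, (Matrix.of fun i j => qF W k i j) = Qmat W k := fun _ => rfl
  by_cases hm0 : maxForestCard W = 0
  · -- degenerate case : W = 0
    have hW : W = 0 := by
      ext i j
      by_cases hij : i = j
      · rw [hij]
        simpa using hW0 j
      · rw [Matrix.zero_apply]
        by_contra hne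
        have hf : IsForestOf W {(i, j)} := by
          refine ⟨⟨?_, ?_, ?_⟩, ?_⟩
          · intro a ha
            rw [Finset.mem_singleton] at ha
            rw [ha]
            exact hij
          · intro v
            exact le_trans (Finset.card_filter_le _ _) (by simp)
          · intro v hv
            obtain ⟨c, hc, hcv⟩ := (Relation.TransGen.head'_iff).mp hv
            have hc' : (v, c) = (i, j) := Finset.mem_singleton.mp hc
            have hvi : v = i := congrArg Prod.fst hc'
            have hcj : c = j := congrArg Prod.snd hc'
            rcases hcv.cases_head with h | ⟨e, he, -⟩
            · exact hij (hvi ▸ hcj ▸ h.symm)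
            · have : c = i := congrArg Prod.fst (Finset.mem_singleton.mp he)
              exact hij (this.symm.trans hcj)
          · intro a ha
            rw [Finset.mem_singleton.mp ha]
            exact hne
        have hle : ({(i, j)} : Arcs n).card ≤ maxForestCard W :=
          Finset.le_sup (f := Finset.card)
            (Finset.mem_filter.mpr ⟨Finset.mem_univ _, hf⟩)
        rw [Finset.card_singleton, hm0] at hle
        omega
    have hL : lap W = 0 := by
      rw [hW, lap]
      ext i j
      simp [Matrix.diagonal]
    have hX0 : X = 0 := by
      have h2 := hX.2.1
      rw [hL, Matrix.mul_zero, Matrix.zero_mul] at h2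
      exact h2.symm
    have hd' : d = n := by rw [hd, hm0, Nat.sub_zero]
    rw [hX0, hd', Nat.sub_self]
    simp only [Nat.zero_sub]
    rw [sub_self, smul_zero]
  · -- main case
    have hmn : maxForestCard W ≤ n := maxForestCard_le W
    set m := maxForestCard W with hmdef
    have hm1 : 1 ≤ m := Nat.one_le_iff_ne_zero.mpr hm0
    have hnd : n - d = m := by omega
    obtain ⟨A0, hA0F, hA0c⟩ := exists_max_forest W
    have hσm : 0 < sigmaF W m := sigmaF_pos hWnn ⟨A0, hA0F, hA0c⟩
    have hA0ne : 0 < A0.card := by rw [hA0c]; omega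
    obtain ⟨a0, ha0⟩ := Finset.card_pos.mp hA0ne
    have hσm1 : 0 < sigmaF W (m - 1) := sigmaF_pos hWnn ⟨A0.erase a0,
      ⟨forest_subset hA0F.1 (Finset.erase_subset _ _),
        fun b hb => hA0F.2 b (Finset.mem_of_mem_erase hb)⟩,
      by rw [Finset.card_erase_of_mem ha0, hA0c]⟩
    have hs0 : sigmaF W (m + 1) = 0 := sigmaF_hi W (by omega)
    have hq0 : Qmat W (m + 1) = 0 := Qmat_hi W (by omega)
    have hLQm : lap W * Qmat W m = 0 := by
      rw [lap_mul_Q, hs0, hq0, zero_smul, zero_sub, neg_zero]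
    have hQmL : Qmat W m * lap W = 0 := by rw [← lap_comm_Q, hLQm]
    have hsub : m - 1 + 1 = m := by omega
    have hLQm1 : lap W * Qmat W (m - 1) = sigmaF W m • 1 - Qmat W m := by
      have h := lap_mul_Q W (m - 1)
      rwa [hsub] at h
    have hmne : sigmaF W m ≠ 0 := ne_of_gt hσm
    have hm1ne : sigmaF W (m - 1) ≠ 0 := ne_of_gt hσm1
    set Y : Matrix (Fin n) (Fin n) ℝ := (sigmaF W m)⁻¹ • Qmat W (m - 1) -
      (sigmaF W (m - 1) / (sigmaF W m * sigmaF W m)) • Qmat W m with hYdef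
    have hLY : lap W * Y = 1 - (sigmaF W m)⁻¹ • Qmat W m := by
      rw [hYdef, mul_sub, Matrix.mul_smul, Matrix.mul_smul, hLQm1, hLQm, smul_zero, sub_zero,
        smul_sub, smul_smul, inv_mul_cancel₀ hmne, one_smul]
    have hYL : Y * lap W = lap W * Y := by
      rw [hYdef, sub_mul, mul_sub, Matrix.smul_mul, Matrix.smul_mul, Matrix.mul_smul,
        Matrix.mul_smul, lap_comm_Q, lap_comm_Q]
    have hQmY : Qmat W m * Y = 0 := by
      rw [hYdef, mul_sub, Matrix.mul_smul, Matrix.mul_smul, ← Q_comm W m (m - 1),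
        QQ_top W hLQm (m - 1), QQ_top W hLQm m, smul_smul, smul_smul, ← sub_smul]
      have hz : (sigmaF W m)⁻¹ * sigmaF W (m - 1)
          - sigmaF W (m - 1) / (sigmaF W m * sigmaF W m) * sigmaF W m = 0 := by
        field_simp
        ring
      rw [hz, zero_smul]
    have hGI : IsGroupInverse (lap W) Y := by
      refine ⟨?_, ?_, hYL.symm⟩
      · rw [hLY, sub_mul, one_mul, Matrix.smul_mul, hQmL, smul_zero, sub_zero]
      · rw [hYL, hLY, sub_mul, one_mul, Matrix.smul_mul, hQmY, smul_zero, sub_zero]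
    have hXY : X = Y := gi_unique hX hGI
    rw [hnd, hQdef, hQdef, hXY, hYdef]
    rw [smul_sub, smul_smul, smul_smul]
    congr 1
    · congr 1
      field_simp
    · congr 1
      field_simp

end Stmt18Aux

/-- forest expression of the group inverse of the Laplacian:
`L# = (σ_{n-d-1}/σ_{n-d})·(P_{n-d-1} - P_{n-d})`, where `d` is the in-forest
connectivity and `P_k = Q_k/σ_k`. -/
theorem stmt18 {n : ℕ} (hn : 1 ≤ n) (W : Matrix (Fin n) (Fin n) ℝ)
    (hWnn : ∀ i j, 0 ≤ W i j) (hW0 : ∀ i, W i i = 0)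
    (d : ℕ) (hd : d = n - maxForestCard W)
    (X : Matrix (Fin n) (Fin n) ℝ) (hX : IsGroupInverse (lap W) X) :
    X = (sigmaF W (n - d - 1) / sigmaF W (n - d)) •
        ((sigmaF W (n - d - 1))⁻¹ • Matrix.of (fun i j => qF W (n - d - 1) i j) -
         (sigmaF W (n - d))⁻¹ • Matrix.of (fun i j => qF W (n - d) i j)) :=
  Stmt18Aux.stmt18_aux hn W hWnn hW0 d hd X hX
end

section
/- For an ergodic Markov chain with stationary distribution π, the group inverse of L = I - T satisfies L# = (L + 1π)^{-1} - 1π, where 1 is the all-ones column vector and π is the stationary row vector. -/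
open Finset Relation Matrix
open scoped Classical

lemma aux_fixed_const {n : ℕ} (hn : 1 ≤ n) (T : Matrix (Fin n) (Fin n) ℝ)
    (hst : IsStochastic T) (hirr : IsIrreducibleMC T)
    (v : Fin n → ℝ) (hv : ∀ i, ∑ j, T i j * v j = v i) :
    ∀ i j, v i = v j := by
  obtain ⟨hTnn, hTrow⟩ := hst
  obtain ⟨i0, -, hi0⟩ := Finset.exists_max_image Finset.univ v ⟨⟨0, hn⟩, Finset.mem_univ _⟩
  have step : ∀ a b, 0 < T a b → v a = v i0 → v b = v i0 := by
    intro a b hab hva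
    have hsum : ∑ j, T a j * (v i0 - v j) = 0 := by
      have : ∑ j, T a j * (v i0 - v j) = (∑ j, T a j) * v i0 - ∑ j, T a j * v j := by
        rw [Finset.sum_mul, ← Finset.sum_sub_distrib]
        exact Finset.sum_congr rfl fun k _ => by ring
      rw [this, hTrow, hv, one_mul, hva, sub_self]
    have hnn : ∀ j ∈ Finset.univ, 0 ≤ T a j * (v i0 - v j) := fun j _ =>
      mul_nonneg (hTnn a j) (sub_nonneg.2 (hi0 j (Finset.mem_univ j)))
    have := (Finset.sum_eq_zero_iff_of_nonneg hnn).1 hsum b (Finset.mem_univ b)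
    have h2 : v i0 - v b = 0 := by
      rcases mul_eq_zero.1 this with h | h
      · exact absurd h (ne_of_gt hab)
      · exact h
    linarith
  have key : ∀ j, v j = v i0 := by
    intro j
    induction hirr i0 j with
    | single h => exact step _ _ h rfl
    | tail _ h ih => exact step _ _ h ih
  intro i j; rw [key i, key j]

lemma aux_pi_pos {n : ℕ} (T : Matrix (Fin n) (Fin n) ℝ)
    (hst : IsStochastic T) (hirr : IsIrreducibleMC T)
    (pi : Fin n → ℝ) (hpi : IsStationaryDist T pi) : ∀ i, 0 < pi i := by
  obtain ⟨hTnn, hTrow⟩ := hst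
  obtain ⟨hpinn, hpisum, hpist⟩ := hpi
  obtain ⟨k, hk⟩ : ∃ k, 0 < pi k := by
    by_contra h
    push_neg at h
    have : ∑ i, pi i ≤ 0 := Finset.sum_nonpos fun i _ => h i
    linarith
  have step : ∀ a b, 0 < pi a → 0 < T a b → 0 < pi b := by
    intro a b hpa hab
    have hle : pi a * T a b ≤ ∑ i, pi i * T i b :=
      Finset.single_le_sum (fun i _ => mul_nonneg (hpinn i) (hTnn i b)) (Finset.mem_univ a)
    rw [hpist] at hle
    exact lt_of_lt_of_le (mul_pos hpa hab) hle
  intro j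
  induction hirr k j with
  | single h => exact step _ _ hk h
  | tail _ h ih => exact step _ _ ih h

lemma aux_left_kernel {n : ℕ} (hn : 1 ≤ n) (T : Matrix (Fin n) (Fin n) ℝ)
    (hst : IsStochastic T) (hirr : IsIrreducibleMC T)
    (pi : Fin n → ℝ) (hpi : IsStationaryDist T pi)
    (w : Fin n → ℝ) (hw : ∀ j, ∑ i, w i * T i j = w j) :
    ∀ j, w j = (∑ i, w i) * pi j := by
  have hpos := aux_pi_pos T hst hirr pi hpi
  obtain ⟨hTnn, hTrow⟩ := hst
  obtain ⟨hpinn, hpisum, hpist⟩ := hpi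
  set That : Matrix (Fin n) (Fin n) ℝ := Matrix.of (fun i j => pi j * T j i / pi i) with hThat
  have hstoch : IsStochastic That := by
    constructor
    · intro i j
      exact div_nonneg (mul_nonneg (hpinn j) (hTnn j i)) (hpinn i)
    · intro i
      have : ∑ j, pi j * T j i / pi i = (∑ j, pi j * T j i) / pi i := by
        rw [Finset.sum_div]
      simp only [hThat, Matrix.of_apply]
      rw [this, hpist, div_self (ne_of_gt (hpos i))]
  have hirr' : IsIrreducibleMC That := by
    intro i j
    have := Relation.TransGen.swap _ _ (hirr j i)
    refine Relation.TransGen.mono ?_ _ _ this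
    intro a b hab
    show 0 < pi b * T b a / pi a
    exact div_pos (mul_pos (hpos b) hab) (hpos a)
  have hx : ∀ i, ∑ j, That i j * (w j / pi j) = w i / pi i := by
    intro i
    have heq : ∀ j, That i j * (w j / pi j) = w j * T j i / pi i := by
      intro j
      simp only [hThat, Matrix.of_apply]
      field_simp [(hpos j).ne', (hpos i).ne']
    rw [Finset.sum_congr rfl fun j _ => heq j, ← Finset.sum_div, hw]
  have hconst := aux_fixed_const hn That hstoch hirr' (fun j => w j / pi j) hx
  set i0 : Fin n := ⟨0, hn⟩
  have hwj : ∀ j, w j = (w i0 / pi i0) * pi j := by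
    intro j
    have h := hconst j i0
    rw [← h, div_mul_cancel₀ _ (ne_of_gt (hpos j))]
  have hsumw : ∑ i, w i = w i0 / pi i0 := by
    rw [Finset.sum_congr rfl fun j _ => hwj j, ← Finset.mul_sum, hpisum, mul_one]
  intro j
  rw [hsumw, hwj j]

/-- for an ergodic chain, `L + 1π` is invertible and the group inverse
of `L = I - T` satisfies `L# = (L + 1π)⁻¹ - 1π`. -/
theorem stmt19 {n : ℕ} (hn : 1 ≤ n) (T : Matrix (Fin n) (Fin n) ℝ)
    (hst : IsStochastic T) (hirr : IsIrreducibleMC T)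
    (pi : Fin n → ℝ) (hpi : IsStationaryDist T pi)
    (X : Matrix (Fin n) (Fin n) ℝ) (hX : IsGroupInverse (1 - T) X) :
    IsUnit ((1 - T) + Matrix.of (fun _ j => pi j)) ∧
      X = ((1 - T) + Matrix.of (fun _ j => pi j))⁻¹ - Matrix.of (fun _ j => pi j) := by

  have hpos := aux_pi_pos T hst hirr pi hpi
  obtain ⟨hTnn, hTrow⟩ := hst
  obtain ⟨hpinn, hpisum, hpist⟩ := hpi
  set L : Matrix (Fin n) (Fin n) ℝ := 1 - T with hLdef
  set PP : Matrix (Fin n) (Fin n) ℝ := Matrix.of (fun _ j => pi j) with hPidef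
  obtain ⟨hLXL, hXLX, hcomm⟩ := hX
  -- row sums of L are zero
  have hLrow : ∀ i, ∑ k, L i k = 0 := by
    intro i
    simp only [hLdef, Matrix.sub_apply, Matrix.one_apply, Finset.sum_sub_distrib, hTrow]
    simp
  -- L * PP = 0
  have hLPi : L * PP = 0 := by
    ext i j
    simp only [Matrix.mul_apply, hPidef, Matrix.of_apply, Matrix.zero_apply]
    rw [← Finset.sum_mul, hLrow, zero_mul]
  -- PP * L = 0
  have hPiL : PP * L = 0 := by
    ext i j
    simp only [Matrix.mul_apply, hPidef, Matrix.of_apply, Matrix.zero_apply, hLdef,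
      Matrix.sub_apply, Matrix.one_apply, mul_sub]
    rw [Finset.sum_sub_distrib, hpist]
    have h1 : ∑ k, pi k * (if k = j then (1:ℝ) else 0) = pi j := by
      simp [mul_ite, Finset.sum_ite_eq']
    rw [h1, sub_self]
  -- PP * PP = PP
  have hPiPi : PP * PP = PP := by
    ext i j
    simp only [Matrix.mul_apply, hPidef, Matrix.of_apply]
    rw [← Finset.sum_mul, hpisum, one_mul]
  set P : Matrix (Fin n) (Fin n) ℝ := 1 - L * X with hPdef
  have hPeq2 : P = 1 - X * L := by rw [hPdef, hcomm]
  have hPL : P * L = 0 := by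
    rw [hPdef, sub_mul, one_mul, mul_assoc, ← mul_assoc, hLXL, sub_self]
  have hLP : L * P = 0 := by
    rw [hPeq2, mul_sub, mul_one, ← mul_assoc, hLXL, sub_self]
  -- entrywise consequences
  have hLP' : ∀ i j, ∑ k, T i k * P k j = P i j := by
    intro i j
    have h0 : (L * P) i j = 0 := by rw [hLP]; rfl
    rw [Matrix.mul_apply] at h0
    have h1 : ∑ k, L i k * P k j
        = ∑ k, ((if i = k then (1:ℝ) else 0) * P k j - T i k * P k j) := by
      refine Finset.sum_congr rfl fun k _ => ?_
      simp only [hLdef, Matrix.sub_apply, Matrix.one_apply, sub_mul]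
    rw [h1, Finset.sum_sub_distrib] at h0
    have h2 : ∑ k, (if i = k then (1:ℝ) else 0) * P k j = P i j := by
      simp [Finset.sum_ite_eq]
    rw [h2] at h0
    linarith
  set i0 : Fin n := ⟨0, hn⟩
  have hPL' : ∀ j, ∑ k, P i0 k * T k j = P i0 j := by
    intro j
    have h0 : (P * L) i0 j = 0 := by rw [hPL]; rfl
    rw [Matrix.mul_apply] at h0
    have h1 : ∑ k, P i0 k * L k j
        = ∑ k, (P i0 k * (if k = j then (1:ℝ) else 0) - P i0 k * T k j) := by
      refine Finset.sum_congr rfl fun k _ => ?_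
      simp only [hLdef, Matrix.sub_apply, Matrix.one_apply, mul_sub]
    rw [h1, Finset.sum_sub_distrib] at h0
    have h2 : ∑ k, P i0 k * (if k = j then (1:ℝ) else 0) = P i0 j := by
      simp [Finset.sum_ite_eq']
    rw [h2] at h0
    linarith
  -- columns of P are constant
  have hcol : ∀ j i, P i j = P i0 j := by
    intro j i
    exact aux_fixed_const hn T ⟨hTnn, hTrow⟩ hirr (fun k => P k j) (fun i => hLP' i j) i i0
  -- the common row is a multiple of pi
  set s : ℝ := ∑ k, P i0 k with hsdef
  have hrow : ∀ j, P i0 j = s * pi j :=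
    aux_left_kernel hn T ⟨hTnn, hTrow⟩ hirr pi ⟨hpinn, hpisum, hpist⟩ (fun j => P i0 j) hPL'
  have hPform : ∀ i j, P i j = s * pi j := fun i j => (hcol j i).trans (hrow j)
  -- P is idempotent
  have hE : (L * X) * (L * X) = L * X := by
    rw [mul_assoc, ← mul_assoc X L X, hXLX]
  have hPP : P * P = P := by
    rw [hPdef]
    rw [sub_mul, mul_sub, mul_sub]
    simp only [one_mul, mul_one]
    rw [hE]
    abel
  -- s = 0 or s = 1
  have hss : s * s = s := by
    have h0 : (P * P) i0 i0 = P i0 i0 := by rw [hPP]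
    rw [Matrix.mul_apply] at h0
    have h1 : ∑ k, P i0 k * P k i0 = s * s * pi i0 := by
      rw [Finset.sum_congr rfl fun k _ => by rw [hPform, hPform]]
      rw [show ∑ k, s * pi k * (s * pi i0) = (s * (s * pi i0)) * ∑ k, pi k by
        rw [Finset.mul_sum]; exact Finset.sum_congr rfl fun k _ => by ring]
      rw [hpisum]; ring
    rw [h1, hPform] at h0
    have := hpos i0
    have h2 : (s * s - s) * pi i0 = 0 := by linarith
    rcases mul_eq_zero.1 h2 with h | h
    · linarith
    · linarith [hpos i0]
  -- s ≠ 0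
  have hs1 : s = 1 := by
    have h01 : s * (s - 1) = 0 := by rw [mul_sub, mul_one, hss, sub_self]
    rcases mul_eq_zero.1 h01 with h | h
    · exfalso
      have hP0 : P = 0 := by
        ext i j; rw [hPform, h, zero_mul]; rfl
      have hLX1 : L * X = 1 := by
        have := hPdef ▸ hP0
        rwa [sub_eq_zero, eq_comm] at this
      have hXL1 : X * L = 1 := hcomm ▸ hLX1
      have hu : L *ᵥ (fun _ => (1:ℝ)) = 0 := by
        ext i
        simp only [Matrix.mulVec, dotProduct, mul_one, Pi.zero_apply]
        exact hLrow i
      have h1 : (X * L) *ᵥ (fun _ => (1:ℝ)) = (fun _ => (1:ℝ)) := by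
        rw [hXL1, Matrix.one_mulVec]
      rw [← Matrix.mulVec_mulVec, hu, Matrix.mulVec_zero] at h1
      have := congrFun h1 i0
      simp at this
    · linarith
  have hPPi : P = PP := by
    ext i j
    rw [hPform, hs1, one_mul]
    rfl
  have hPiX : PP * X = 0 := by
    rw [← hPPi, hPeq2, sub_mul, one_mul, hXLX, sub_self]
  have hXPi : X * PP = 0 := by
    rw [← hPPi, hPdef, mul_sub, mul_one, ← mul_assoc, hXLX, sub_self]
  have hright : (L + PP) * (X + PP) = 1 := by
    rw [add_mul, mul_add, mul_add, hLPi, hPiX, hPiPi, add_zero, zero_add, ← hPPi, hPdef]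
    abel
  have hleft : (X + PP) * (L + PP) = 1 := by
    rw [add_mul, mul_add, mul_add, hXPi, hPiL, hPiPi, add_zero, zero_add, ← hPPi, hPeq2]
    abel
  refine ⟨⟨⟨L + PP, X + PP, hright, hleft⟩, rfl⟩, ?_⟩
  rw [Matrix.inv_eq_right_inv hright, add_sub_cancel_right]
end
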